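/- arXiv:2412.11528 — 7 statements merged into one kernel-verified Lean document; each statement's English description precedes it below -/
import Mathlib

section
/- For every n ≥ 0, the number of compositions of n with all parts in {1,2} and zero water cells equals ⌊n²/4⌋ + 1. -/
/-- A composition of `n`: a list of positive integers summing to `n`. -/
def IsComposition (n : ℕ) (l : List ℕ) : Prop :=
  (∀ x ∈ l, 0 < x) ∧ l.sum = n

/-- All parts of the list lie in {1, 2}. -/
def Parts12 (l : List ℕ) : Prop := ∀ x ∈ l, x = 1 ∨ x = 2

/-- Number of water cells: parts equal to 1 with a part 2 strictly before
and a part 2 strictly after. -/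
noncomputable def waterCells (l : List ℕ) : ℕ :=
  {i : Fin l.length | l.get i = 1 ∧ (∃ j : Fin l.length, j < i ∧ l.get j = 2) ∧
    (∃ j : Fin l.length, i < j ∧ l.get j = 2)}.ncard

/-- `w n k`: number of compositions of `n` with parts in {1,2} and exactly `k` water cells. -/
noncomputable def w (n k : ℕ) : ℕ :=
  {l : List ℕ | Parts12 l ∧ l.sum = n ∧ waterCells l = k}.ncard

/-- Diagonal sums of the water-cell array. -/
noncomputable def d (n : ℕ) : ℕ := ∑ k ∈ Finset.range (n + 1), w (n - k) k

/-- All internal parts (other than the first and last) are even. -/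
def InternalEven (l : List ℕ) : Prop := ∀ x ∈ (l.drop 1).dropLast, Even x

/-! A list of 1s and 2s has no water cell exactly when it avoids 2, 1, 2 as a subsequence,
that is, when it is a plateau 1^a 2^b 1^c. Among those with sum n, b = 0 gives only 1^n,
and each 1 ≤ b ≤ n/2 gives n - 2b + 1 choices of a; these sum to ⌊n²/4⌋. -/

open Finset
open scoped List

def plateau (a b c : ℕ) : List ℕ :=
  List.replicate a 1 ++ List.replicate b 2 ++ List.replicate c 1

namespace plateau

variable (a b c : ℕ)

lemma zero_middle : plateau a 0 c = plateau (a + c) 0 0 := by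
  simp only [plateau, List.replicate_zero, List.append_nil, List.replicate_append_replicate]

lemma getElem (i : ℕ) (h : i < (plateau a b c).length) :
    (plateau a b c)[i] = if i < a then 1 else if i < a + b then 2 else 1 := by
  simp only [plateau, List.getElem_append, List.getElem_replicate, List.length_replicate,
    List.length_append] at h ⊢
  split_ifs <;> omega

lemma sum : (plateau a b c).sum = a + 2 * b + c := by
  simp [plateau, List.sum_replicate]; ring

lemma count_two : (plateau a b c).count 2 = b := by
  simp [plateau, List.count_replicate]

lemma idxOf_two {b : ℕ} (hb : 0 < b) : (plateau a b c).idxOf 2 = a := by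
  obtain ⟨b, rfl⟩ := Nat.exists_eq_add_of_lt hb
  rw [plateau, List.append_assoc, List.idxOf_append_of_notMem (by simp)]
  simp [List.replicate_succ]

lemma parts12 : Parts12 (plateau a b c) := by
  intro x hx
  simp only [plateau, List.mem_append, List.mem_replicate] at hx
  omega

lemma waterCells_eq_zero : waterCells (plateau a b c) = 0 := by
  rw [waterCells, Set.ncard_eq_zero, Set.eq_empty_iff_forall_notMem]
  rintro i ⟨hi, ⟨j, hji, hj⟩, ⟨k, hik, hk⟩⟩
  simp only [List.get_eq_getElem, plateau.getElem] at hi hj hk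
  have : (j : ℕ) < i := hji
  have : (i : ℕ) < k := hik
  split_ifs at hi hj hk <;> omega

end plateau

lemma not_sublist_of_waterCells_eq_zero {l : List ℕ} (h : waterCells l = 0) :
    ¬ [2, 1, 2] <+ l := by
  rw [List.sublist_iff_exists_fin_orderEmbedding_get_eq]
  rintro ⟨f, hf⟩
  rw [waterCells, Set.ncard_eq_zero, Set.eq_empty_iff_forall_notMem] at h
  refine h (f 1) ⟨(hf 1).symm, ⟨f 0, f.strictMono (by decide), (hf 0).symm⟩,
    ⟨f 2, f.strictMono (by decide), (hf 2).symm⟩⟩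

lemma Parts12.of_cons {x : ℕ} {l : List ℕ} (h : Parts12 (x :: l)) : Parts12 l :=
  fun y hy => h y (List.mem_cons_of_mem x hy)

lemma exists_eq_replicate_append_of_not_sublist {l : List ℕ} (h12 : Parts12 l)
    (h : ¬ [1, 2] <+ l) : ∃ b c, l = List.replicate b 2 ++ List.replicate c 1 := by
  induction l with
  | nil => exact ⟨0, 0, rfl⟩
  | cons x t ih =>
    rcases h12 x List.mem_cons_self with rfl | rfl
    · have hall : ∀ y ∈ t, y = 1 := fun y hy =>
        (h12.of_cons y hy).resolve_right fun h2 =>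
          h ((List.singleton_sublist.mpr (h2 ▸ hy)).cons_cons 1)
      obtain ⟨c, rfl⟩ : ∃ c, t = List.replicate c 1 :=
        ⟨_, List.eq_replicate_iff.mpr ⟨rfl, hall⟩⟩
      exact ⟨0, c + 1, rfl⟩
    · obtain ⟨b, c, rfl⟩ := ih h12.of_cons fun h' => h (h'.cons 2)
      exact ⟨b + 1, c, rfl⟩

lemma exists_eq_plateau_of_not_sublist {l : List ℕ} (h12 : Parts12 l)
    (h : ¬ [2, 1, 2] <+ l) : ∃ a b c, l = plateau a b c := by
  induction l with
  | nil => exact ⟨0, 0, 0, rfl⟩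
  | cons x t ih =>
    rcases h12 x List.mem_cons_self with rfl | rfl
    · obtain ⟨a, b, c, rfl⟩ := ih h12.of_cons fun h' => h (h'.cons 1)
      exact ⟨a + 1, b, c, rfl⟩
    · obtain ⟨b, c, rfl⟩ :=
        exists_eq_replicate_append_of_not_sublist h12.of_cons fun h' => h (h'.cons_cons 2)
      exact ⟨0, b + 1, c, rfl⟩

def plateauLists (n : ℕ) : Finset (List ℕ) :=
  insert (plateau n 0 0) ((range (n / 2)).biUnion fun b =>
    (range (n - 2 * b - 1)).image fun a => plateau a (b + 1) (n - 2 * b - 2 - a))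

lemma setOf_waterCells_eq_zero (n : ℕ) :
    {l : List ℕ | Parts12 l ∧ l.sum = n ∧ waterCells l = 0} = ↑(plateauLists n) := by
  ext l
  simp only [Set.mem_ofPred_eq, plateauLists, mem_coe, mem_insert, mem_biUnion, mem_image,
    mem_range]
  constructor
  · rintro ⟨h12, rfl, hw⟩
    obtain ⟨a, b, c, rfl⟩ :=
      exists_eq_plateau_of_not_sublist h12 (not_sublist_of_waterCells_eq_zero hw)
    rw [plateau.sum]
    rcases b with _ | b
    · exact .inl (by rw [plateau.zero_middle]; congr 1)
    · exact .inr ⟨b, by omega, a, by omega, by congr 1; omega⟩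
  · rintro (rfl | ⟨b, hb, a, ha, rfl⟩) <;>
      refine ⟨plateau.parts12 _ _ _, ?_, plateau.waterCells_eq_zero _ _ _⟩ <;>
      rw [plateau.sum] <;> omega

lemma sum_range_half_sub_two_mul_sub_one :
    ∀ n : ℕ, ∑ b ∈ range (n / 2), (n - 2 * b - 1) = n ^ 2 / 4
  | 0 => rfl
  | 1 => rfl
  | n + 2 => by
    rw [show (n + 2) / 2 = n / 2 + 1 by omega, sum_range_succ',
      show (n + 2) ^ 2 = n ^ 2 + (n + 1) * 4 by ring, Nat.add_mul_div_right _ _ (by norm_num),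
      ← sum_range_half_sub_two_mul_sub_one n]
    congr 1
    exact sum_congr rfl fun b _ => by omega

lemma card_plateauLists (n : ℕ) : #(plateauLists n) = n ^ 2 / 4 + 1 := by
  have count_two_of_mem : ∀ b, ∀ l ∈ (range (n - 2 * b - 1)).image
      fun a => plateau a (b + 1) (n - 2 * b - 2 - a), l.count 2 = b + 1 := by
    simp only [mem_image]
    rintro b l ⟨a, -, rfl⟩
    exact plateau.count_two ..
  rw [plateauLists, card_insert_of_notMem, card_biUnion, add_left_inj,
    ← sum_range_half_sub_two_mul_sub_one]
  · refine sum_congr rfl fun b _ => ?_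
    rw [card_image_of_injective, card_range]
    intro a a' h
    simpa only [plateau.idxOf_two _ _ (Nat.succ_pos b)] using congrArg (List.idxOf 2) h
  · intro b _ b' _ hbb'
    refine disjoint_left.mpr fun l hl hl' => hbb' ?_
    simpa using (count_two_of_mem b l hl).symm.trans (count_two_of_mem b' l hl')
  · simp only [mem_biUnion, not_exists, not_and]
    intro b _ h
    simpa [plateau.count_two] using count_two_of_mem b _ h

theorem stmt2 (n : ℕ) : w n 0 = n ^ 2 / 4 + 1 := by
  rw [w, setOf_waterCells_eq_zero, Set.ncard_coe_finset, card_plateauLists]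
end

section
/- The generating function for w(n,0) is ∑_{n≥0} w(n,0) q^n = 1/(1-q) + q²/((1-q)²(1-q²)) = (1 - q + q³)/(1 - 2q + 2q³ - q⁴). -/
/-- The power series variable, as a formal power series over ℚ. -/
noncomputable def q : PowerSeries ℚ := PowerSeries.X

/-!
A composition with parts in `{1, 2}` has no water cell exactly when its 2s are consecutive,
i.e. it is `1^a 2^b 1^c`. For `b ≥ 1` it is determined by `(b, c)` with `2b + c ≤ n`, which
gives `w n 0 = ⌊n/2⌋ (n - ⌊n/2⌋) + 1` and so `w (n + 2) 0 = w n 0 + n + 1`. For the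
generating function `W` this says `W (1 - q²) = 1 + q + q² / (1 - q)²`, i.e.
`W (1 - q)² (1 - q²) = 1 - q + q³`, and `(1 - q)² (1 - q²) = 1 - 2q + 2q³ - q⁴`.
-/

open PowerSeries

namespace WaterCells

def blocks (a b c : ℕ) : List ℕ :=
  List.replicate a 1 ++ List.replicate b 2 ++ List.replicate c 1

lemma length_blocks (a b c : ℕ) : (blocks a b c).length = a + b + c := by
  simp [blocks, add_assoc]

lemma sum_blocks (a b c : ℕ) : (blocks a b c).sum = a + 2 * b + c := by
  simp [blocks, List.sum_replicate]
  ring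

lemma count_two_blocks (a b c : ℕ) : (blocks a b c).count 2 = b := by
  simp [blocks, List.count_replicate]

lemma parts12_blocks (a b c : ℕ) : Parts12 (blocks a b c) := by
  intro x hx
  simp only [blocks, List.mem_append, List.mem_replicate] at hx
  omega

lemma getElem_blocks {a b c i : ℕ} (h : i < (blocks a b c).length) :
    (blocks a b c)[i] = if a ≤ i ∧ i < a + b then 2 else 1 := by
  simp only [blocks, List.getElem_append, List.getElem_replicate, List.length_append,
    List.length_replicate]
  split_ifs <;> omega

lemma blocks_zero_zero (n : ℕ) : blocks n 0 0 = List.replicate n 1 := by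
  simp [blocks]

def NoWater (l : List ℕ) : Prop :=
  ∀ i j k : Fin l.length, j < i → i < k → l.get j = 2 → l.get k = 2 → l.get i ≠ 1

lemma waterCells_eq_zero_iff (l : List ℕ) : waterCells l = 0 ↔ NoWater l := by
  simp only [waterCells, Set.ncard_eq_zero (Set.toFinite _), Set.eq_empty_iff_forall_notMem,
    Set.mem_ofPred_eq, NoWater]
  grind

lemma NoWater.of_cons {x : ℕ} {l : List ℕ} (h : NoWater (x :: l)) : NoWater l :=
  fun i j k hji hik =>
    h i.succ j.succ k.succ (Fin.succ_lt_succ_iff.2 hji) (Fin.succ_lt_succ_iff.2 hik)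

lemma noWater_blocks (a b c : ℕ) : NoWater (blocks a b c) := by
  intro i j k hji hik hj hk hi
  simp only [Fin.lt_def, List.get_eq_getElem, getElem_blocks] at *
  split_ifs at hi hj hk <;> omega

lemma exists_eq_blocks {l : List ℕ} (h12 : Parts12 l) (hw : NoWater l) :
    ∃ a b c, l = blocks a b c := by
  induction l with
  | nil => exact ⟨0, 0, 0, rfl⟩
  | cons x l ih =>
    obtain ⟨a, b, c, rfl⟩ := ih (fun y hy => h12 y (List.mem_cons_of_mem _ hy)) hw.of_cons
    rcases h12 x List.mem_cons_self with rfl | rfl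
    · exact ⟨a + 1, b, c, by simp [blocks, List.replicate_succ]⟩
    · rcases Nat.eq_zero_or_pos a with rfl | ha
      · exact ⟨0, b + 1, c, by simp [blocks, List.replicate_succ]⟩
      rcases Nat.eq_zero_or_pos b with rfl | hb
      · exact ⟨0, 1, a + c, by simp [blocks]⟩
      -- the leading 2, the first 1 and the first 2 of `blocks a b c` form a water cell
      exfalso
      have hlen : (2 :: blocks a b c).length = a + b + c + 1 := by simp [length_blocks]
      refine hw ⟨1, by omega⟩ ⟨0, by omega⟩ ⟨a + 1, by omega⟩ (by simp [Fin.lt_def])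
        (by simp [Fin.lt_def]; omega) (by simp) ?_ ?_
      · simp [getElem_blocks]; omega
      · simp [getElem_blocks]; omega

lemma le_of_blocks_eq {a a' b c c' : ℕ} (hb : 0 < b) (h : blocks a b c = blocks a' b c') :
    a ≤ a' := by
  by_contra! ha
  have hlen : a' < (blocks a b c).length := by rw [length_blocks]; omega
  have := List.getElem_of_eq h hlen
  rw [getElem_blocks, getElem_blocks] at this
  split_ifs at this <;> omega

lemma eq_of_blocks_eq {a a' b b' c c' : ℕ} (hb : 0 < b) (h : blocks a b c = blocks a' b' c') :
    a = a' ∧ b = b' ∧ c = c' := by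
  obtain rfl : b = b' := by simpa only [count_two_blocks] using congrArg (List.count 2) h
  obtain rfl : a = a' := (le_of_blocks_eq hb h).antisymm (le_of_blocks_eq hb h.symm)
  have := congrArg List.length h
  simp only [length_blocks] at this
  exact ⟨rfl, rfl, by omega⟩

/-- The pair `(b, c)` stands for the composition `blocks (n - 2 * b - c) b c` of `n`. -/
def blockShapes (n : ℕ) : Finset ((_ : ℕ) × ℕ) :=
  (Finset.Icc 1 (n / 2)).sigma fun b => Finset.range (n + 1 - 2 * b)

lemma mem_blockShapes {n : ℕ} {p : (_ : ℕ) × ℕ} :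
    p ∈ blockShapes n ↔ 1 ≤ p.1 ∧ 2 * p.1 + p.2 ≤ n := by
  simp only [blockShapes, Finset.mem_sigma, Finset.mem_Icc, Finset.mem_range]
  omega

lemma sum_Icc_add_one_sub_two_mul {n k : ℕ} (h : 2 * k ≤ n) :
    ∑ b ∈ Finset.Icc 1 k, (n + 1 - 2 * b) = k * (n - k) := by
  induction k with
  | zero => simp
  | succ k ih =>
    rw [Finset.sum_Icc_succ_top (by omega), ih (by omega)]
    obtain ⟨d, rfl⟩ := Nat.exists_eq_add_of_le h
    rw [show 2 * (k + 1) + d - k = k + 2 + d by omega,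
      show 2 * (k + 1) + d + 1 - 2 * (k + 1) = d + 1 by omega,
      show 2 * (k + 1) + d - (k + 1) = k + 1 + d by omega]
    ring

lemma card_blockShapes (n : ℕ) : (blockShapes n).card = n / 2 * (n - n / 2) := by
  rw [blockShapes, Finset.card_sigma]
  simp only [Finset.card_range]
  exact sum_Icc_add_one_sub_two_mul (by omega)

lemma setOf_waterCells_eq_zero (n : ℕ) :
    {l : List ℕ | Parts12 l ∧ l.sum = n ∧ waterCells l = 0} =
      insert (List.replicate n 1)
        ((blockShapes n).image fun p => blocks (n - 2 * p.1 - p.2) p.1 p.2 : Set (List ℕ)) := by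
  ext l
  simp only [Set.mem_ofPred_eq, Set.mem_insert_iff, Finset.coe_image, Set.mem_image,
    Finset.mem_coe, mem_blockShapes, waterCells_eq_zero_iff]
  constructor
  · rintro ⟨h12, hsum, hw⟩
    obtain ⟨a, b, c, rfl⟩ := exists_eq_blocks h12 hw
    rw [sum_blocks] at hsum
    rcases Nat.eq_zero_or_pos b with rfl | hb
    · left
      simp [blocks, ← hsum]
    · refine Or.inr ⟨⟨b, c⟩, ⟨hb, by dsimp only; omega⟩, ?_⟩
      rw [show n - 2 * b - c = a by omega]
  · rintro (rfl | ⟨⟨b, c⟩, ⟨hb, hle⟩, rfl⟩)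
    · rw [← blocks_zero_zero]
      exact ⟨parts12_blocks _ _ _, by simp [sum_blocks], noWater_blocks _ _ _⟩
    · refine ⟨parts12_blocks _ _ _, ?_, noWater_blocks _ _ _⟩
      simp only [sum_blocks] at hle ⊢
      omega

theorem w_zero (n : ℕ) : w n 0 = n / 2 * (n - n / 2) + 1 := by
  rw [w, setOf_waterCells_eq_zero, Set.ncard_insert_of_notMem, Set.ncard_coe_finset,
    Finset.card_image_of_injOn, card_blockShapes]
  · rintro ⟨b, c⟩ hp ⟨b', c'⟩ - h
    obtain ⟨-, rfl, rfl⟩ := eq_of_blocks_eq (mem_blockShapes.1 hp).1 h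
    rfl
  · simp only [Finset.coe_image, Set.mem_image, Finset.mem_coe, mem_blockShapes, not_exists,
      not_and]
    intro p hp h
    have := congrArg (List.count 2) h
    simp [count_two_blocks, List.count_replicate] at this
    omega

theorem w_add_two_zero (n : ℕ) : w (n + 2) 0 = w n 0 + (n + 1) := by
  obtain ⟨m, hm⟩ : ∃ m, n = n / 2 + m := ⟨n - n / 2, by omega⟩
  rw [w_zero, w_zero, show (n + 2) / 2 = n / 2 + 1 by omega,
    show n + 2 - (n / 2 + 1) = m + 1 by omega, show n - n / 2 = m by omega]
  nth_rw 3 [hm]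
  ring

variable {R : Type*} [CommRing R]

lemma mk_w_zero_mul_one_sub_X_sq :
    mk (fun n => (w n 0 : R)) * (1 - X ^ 2) = 1 + X + X ^ 2 * mk (fun n => (n : R) + 1) := by
  ext (_ | _ | n)
  · simp [w_zero]
  · simp [mul_sub, coeff_X, coeff_mul_X_pow', coeff_X_pow_mul', w_zero]
  · simp [mul_sub, coeff_X, coeff_mul_X_pow', coeff_X_pow_mul', w_add_two_zero]

lemma mk_add_one_mul_one_sub_X_sq : mk (fun n => (n : R) + 1) * (1 - X) ^ 2 = 1 := by
  simpa [Nat.choose_one_right, add_comm] using mk_add_choose_mul_one_sub_pow_eq_one (S := R) 1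

lemma mk_w_zero_mul :
    mk (fun n => (w n 0 : R)) * ((1 - X) ^ 2 * (1 - X ^ 2)) = 1 - X + X ^ 3 := by
  linear_combination (1 - X) ^ 2 * mk_w_zero_mul_one_sub_X_sq (R := R) +
    X ^ 2 * mk_add_one_mul_one_sub_X_sq (R := R)

end WaterCells

theorem stmt6 :
    PowerSeries.mk (fun n => (w n 0 : ℚ)) =
      (1 - q)⁻¹ + q ^ 2 * ((1 - q) ^ 2 * (1 - q ^ 2))⁻¹ ∧
    PowerSeries.mk (fun n => (w n 0 : ℚ)) =
      (1 - q + q ^ 3) * (1 - 2 * q + 2 * q ^ 3 - q ^ 4)⁻¹ := by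
  have key : mk (fun n => (w n 0 : ℚ)) * ((1 - q) ^ 2 * (1 - q ^ 2)) = 1 - q + q ^ 3 :=
    WaterCells.mk_w_zero_mul
  have hD : constantCoeff ((1 - q) ^ 2 * (1 - q ^ 2)) ≠ 0 := by simp [q]
  have hD_ne : (1 - q) ^ 2 * (1 - q ^ 2) ≠ 0 := fun h => hD (by rw [h, map_zero])
  refine ⟨mul_right_cancel₀ hD_ne ?_, ?_⟩
  · have h1 := PowerSeries.inv_mul_cancel (1 - q) (by simp [q])
    have h2 := PowerSeries.inv_mul_cancel _ hD
    linear_combination key - (1 - q) * (1 - q ^ 2) * h1 - q ^ 2 * h2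
  · rw [show (1 - 2 * q + 2 * q ^ 3 - q ^ 4) = (1 - q) ^ 2 * (1 - q ^ 2) by ring]
    exact (PowerSeries.eq_mul_inv_iff_mul_eq hD).2 key
end

section
/- For every fixed k ≥ 1, ∑_{n≥0} w(n,k) q^n = q^{k+4} / ((1-q)²(1-q²)^{k+1}) as formal power series. -/
/-!
A composition with a water cell has at least two parts `2`, so it is uniquely
`1^a 2 M 2 1^b`, and its water cells are exactly the parts `1` of `M`. The generating
function is therefore `q^4 (1 - q)⁻²` times the generating function `G_k` of `{1,2}`-words
with exactly `k` ones; splitting off the first letter gives `G_k = q G_{k-1} + q^2 G_k`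
(and `G_0 = 1 + q^2 G_0`), whence `G_k = q^k / (1 - q^2)^(k + 1)`.
-/

open PowerSeries
open Finset.HasAntidiagonal (antidiagonal mem_antidiagonal)

section WeightSeries

variable {α β : Type*}

-- Infinite fibers contribute the junk value `0`, hence the `FiniteFibers` hypotheses below.
noncomputable def weightSeries (wt : α → ℕ) (s : Set α) : ℚ⟦X⟧ :=
  mk fun n => ({x ∈ s | wt x = n}.ncard : ℚ)

def FiniteFibers (wt : α → ℕ) (s : Set α) : Prop := ∀ n, {x ∈ s | wt x = n}.Finite

variable {wt : α → ℕ} {s t : Set α}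

@[simp] lemma coeff_weightSeries (n : ℕ) :
    coeff n (weightSeries wt s) = ({x ∈ s | wt x = n}.ncard : ℚ) :=
  coeff_mk _ _

lemma FiniteFibers.subset (ht : FiniteFibers wt t) (hst : s ⊆ t) : FiniteFibers wt s :=
  fun n => (ht n).subset fun _ hx => ⟨hst hx.1, hx.2⟩

lemma weightSeries_singleton (a : α) : weightSeries wt {a} = X ^ wt a := by
  ext n
  rw [coeff_weightSeries, coeff_X_pow]
  split_ifs with h
  · rw [Set.sep_eq_self_iff_mem_true.mpr (by simp [h]), Set.ncard_singleton, Nat.cast_one]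
  · rw [Set.sep_eq_empty_iff_mem_false.mpr (by simp [Ne.symm h]), Set.ncard_empty, Nat.cast_zero]

lemma weightSeries_image {wt' : β → ℕ} {f : α → β} (d : ℕ) (hf : Set.InjOn f s)
    (hw : ∀ x ∈ s, wt' (f x) = wt x + d) :
    weightSeries wt' (f '' s) = X ^ d * weightSeries wt s := by
  ext n
  rw [coeff_weightSeries, coeff_X_pow_mul', coeff_weightSeries]
  have hfib : {y ∈ f '' s | wt' y = n} = f '' {x ∈ s | wt x + d = n} := by
    ext y
    simp only [Set.mem_sep_iff, Set.mem_image]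
    constructor
    · rintro ⟨⟨x, hx, rfl⟩, hy⟩
      exact ⟨x, ⟨hx, hw x hx ▸ hy⟩, rfl⟩
    · rintro ⟨x, ⟨hx, hxn⟩, rfl⟩
      exact ⟨⟨x, hx, rfl⟩, hw x hx ▸ hxn⟩
  rw [hfib, (hf.mono (Set.sep_subset _ _)).ncard_image]
  split_ifs with h
  · rw [Set.sep_ext_iff.mpr fun x (_ : x ∈ s) => (by omega : wt x + d = n ↔ wt x = n - d)]
  · rw [Set.sep_eq_empty_iff_mem_false.mpr (fun x _ => by omega), Set.ncard_empty, Nat.cast_zero]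

lemma weightSeries_union (hst : Disjoint s t) (hs : FiniteFibers wt s) (ht : FiniteFibers wt t) :
    weightSeries wt (s ∪ t) = weightSeries wt s + weightSeries wt t := by
  ext n
  have hfib : {x ∈ s ∪ t | wt x = n} = {x ∈ s | wt x = n} ∪ {x ∈ t | wt x = n} :=
    Set.union_inter_distrib_right _ _ _
  rw [map_add, coeff_weightSeries, coeff_weightSeries, coeff_weightSeries, hfib,
    Set.ncard_union_eq (hst.mono (Set.sep_subset _ _) (Set.sep_subset _ _)) (hs n) (ht n),
    Nat.cast_add]

variable {wt' : β → ℕ} {u : Set β}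

lemma sep_prod_eq_biUnion_antidiagonal (n : ℕ) :
    {p ∈ s ×ˢ u | wt p.1 + wt' p.2 = n} = ⋃ ij ∈ (antidiagonal n : Set (ℕ × ℕ)),
      {x ∈ s | wt x = ij.1} ×ˢ {y ∈ u | wt' y = ij.2} := by
  ext p
  simp only [Set.mem_sep_iff, Set.mem_prod, Set.mem_iUnion, Finset.mem_coe, mem_antidiagonal,
    exists_prop, Prod.exists]
  constructor
  · rintro ⟨⟨hs, hu⟩, rfl⟩
    exact ⟨_, _, rfl, ⟨hs, rfl⟩, hu, rfl⟩
  · rintro ⟨i, j, rfl, ⟨hs, rfl⟩, hu, rfl⟩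
    exact ⟨⟨hs, hu⟩, rfl⟩

lemma FiniteFibers.prod (hs : FiniteFibers wt s) (hu : FiniteFibers wt' u) :
    FiniteFibers (fun p : α × β => wt p.1 + wt' p.2) (s ×ˢ u) := fun n => by
  rw [sep_prod_eq_biUnion_antidiagonal]
  exact (Finset.finite_toSet _).biUnion fun ij _ => (hs _).prod (hu _)

lemma weightSeries_prod (hs : FiniteFibers wt s) (hu : FiniteFibers wt' u) :
    weightSeries (fun p : α × β => wt p.1 + wt' p.2) (s ×ˢ u) =
      weightSeries wt s * weightSeries wt' u := by
  ext n
  have hdisj : (antidiagonal n : Set (ℕ × ℕ)).PairwiseDisjoint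
      fun ij => {x ∈ s | wt x = ij.1} ×ˢ {y ∈ u | wt' y = ij.2} :=
    fun ij _ ij' _ hne => Set.disjoint_left.mpr fun p hp hp' =>
      hne (Prod.ext (hp.1.2.symm.trans hp'.1.2) (hp.2.2.symm.trans hp'.2.2))
  rw [coeff_mul, coeff_weightSeries, sep_prod_eq_biUnion_antidiagonal,
    Set.Finite.ncard_biUnion (Finset.finite_toSet _) (fun ij _ => (hs _).prod (hu _)) hdisj,
    finsum_mem_coe_finset, Nat.cast_sum]
  simp only [Set.ncard_prod, Nat.cast_mul, coeff_weightSeries]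

end WeightSeries

lemma List.ncard_get_eq {α : Type*} [DecidableEq α] (l : List α) (x : α) :
    {i : Fin l.length | l.get i = x}.ncard = l.count x := by
  rw [Set.ncard_eq_toFinset_card', Set.toFinset_ofPred]
  exact Fin.card_filter_univ_eq_vector_get_eq_count x ⟨l, rfl⟩

lemma List.replicate_append_cons_inj {α : Type*} {x y : α} (hxy : x ≠ y) {a a' : ℕ}
    {t t' : List α} (h : replicate a x ++ y :: t = replicate a' x ++ y :: t') :
    a = a' ∧ t = t' := by
  induction a generalizing a' with
  | zero => cases a' <;> simp_all [List.replicate_succ, Ne.symm hxy]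
  | succ a ih => cases a' <;> simp_all [List.replicate_succ]

section Words

@[simp] lemma parts12_cons {x : ℕ} {l : List ℕ} :
    Parts12 (x :: l) ↔ (x = 1 ∨ x = 2) ∧ Parts12 l :=
  List.forall_mem_cons

lemma finiteFibers_sum_parts12 : FiniteFibers List.sum {l | Parts12 l} := fun n =>
  (Set.finite_range fun c : Composition n => c.blocks).subset fun l ⟨hl, hsum⟩ =>
    ⟨⟨l, fun hx => by rcases hl _ hx with h | h <;> omega, hsum⟩, rfl⟩

def wordsWithOnes (k : ℕ) : Set (List ℕ) := {M | Parts12 M ∧ M.count 1 = k}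

lemma finiteFibers_wordsWithOnes (k : ℕ) : FiniteFibers List.sum (wordsWithOnes k) :=
  finiteFibers_sum_parts12.subset fun _ hM => hM.1

lemma wordsWithOnes_zero : wordsWithOnes 0 = {[]} ∪ List.cons 2 '' wordsWithOnes 0 := by
  ext (_ | ⟨x, M⟩)
  · simp [wordsWithOnes, Parts12]
  · simp only [wordsWithOnes, Set.mem_ofPred_eq, parts12_cons, Set.singleton_union,
      Set.mem_insert_iff, reduceCtorEq, Set.mem_image, List.cons.injEq, exists_eq_right_right,
      false_or]
    grind

lemma wordsWithOnes_succ (k : ℕ) :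
    wordsWithOnes (k + 1) =
      List.cons 1 '' wordsWithOnes k ∪ List.cons 2 '' wordsWithOnes (k + 1) := by
  ext (_ | ⟨x, M⟩)
  · simp [wordsWithOnes]
  · simp only [wordsWithOnes, Set.mem_ofPred_eq, parts12_cons, Set.mem_union, Set.mem_image,
      List.cons.injEq, exists_eq_right_right]
    grind

lemma weightSeries_cons_image (x : ℕ) (s : Set (List ℕ)) :
    weightSeries List.sum (List.cons x '' s) = X ^ x * weightSeries List.sum s :=
  weightSeries_image x List.cons_injective.injOn fun M _ => by rw [List.sum_cons, add_comm]

lemma weightSeries_wordsWithOnes_mul (k : ℕ) :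
    weightSeries List.sum (wordsWithOnes k) * (1 - X ^ 2) ^ (k + 1) = X ^ k := by
  induction k with
  | zero =>
    have hfin := finiteFibers_wordsWithOnes 0
    have h : weightSeries List.sum (wordsWithOnes 0) =
        1 + X ^ 2 * weightSeries List.sum (wordsWithOnes 0) := by
      conv_lhs => rw [wordsWithOnes_zero]
      rw [weightSeries_union (Set.disjoint_singleton_left.mpr (by simp))
        (hfin.subset (Set.subset_union_left.trans wordsWithOnes_zero.ge))
        (hfin.subset (Set.subset_union_right.trans wordsWithOnes_zero.ge)),
        weightSeries_singleton, weightSeries_cons_image, List.sum_nil, pow_zero]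
    linear_combination h
  | succ k ih =>
    have hfin := finiteFibers_wordsWithOnes (k + 1)
    have h : weightSeries List.sum (wordsWithOnes (k + 1)) =
        X * weightSeries List.sum (wordsWithOnes k) +
          X ^ 2 * weightSeries List.sum (wordsWithOnes (k + 1)) := by
      conv_lhs => rw [wordsWithOnes_succ]
      rw [weightSeries_union (Set.disjoint_left.mpr (by simp))
        (hfin.subset (Set.subset_union_left.trans (wordsWithOnes_succ k).ge))
        (hfin.subset (Set.subset_union_right.trans (wordsWithOnes_succ k).ge)),
        weightSeries_cons_image, weightSeries_cons_image, pow_one]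
    linear_combination (1 - X ^ 2) ^ (k + 1) * h + X * ih

end Words

section Framed

def framed (a b : ℕ) (M : List ℕ) : List ℕ :=
  List.replicate a 1 ++ 2 :: (M ++ 2 :: List.replicate b 1)

variable (a b : ℕ) (M : List ℕ)

lemma length_framed : (framed a b M).length = a + M.length + b + 2 := by
  grind [framed]

lemma sum_framed : (framed a b M).sum = a + (b + M.sum) + 4 := by
  grind [framed, List.sum_replicate]

lemma parts12_framed_iff : Parts12 (framed a b M) ↔ Parts12 M := by
  simp only [Parts12, framed, List.mem_append, List.mem_replicate, List.mem_cons]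
  grind

lemma waterCells_framed : waterCells (framed a b M) = M.count 1 := by
  set l := framed a b M
  have hlen : l.length = a + M.length + b + 2 := length_framed a b M
  have hmid (j : ℕ) (hj : j < M.length) : l[a + 1 + j]'(by omega) = M[j] := by
    grind [framed]
  have hfirst : l[a]'(by omega) = 2 := by simp [l, framed]
  have hlast : l[a + 1 + M.length]'(by omega) = 2 := by
    grind [framed]
  have htwo (i : ℕ) (hi : i < l.length) (h2 : l[i] = 2) : a ≤ i ∧ i ≤ a + 1 + M.length := by
    grind [framed]
  let e : Fin M.length → Fin l.length := fun j => ⟨a + 1 + j, by omega⟩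
  have he : Function.Injective e := fun j j' h => Fin.ext (by simpa [e] using h)
  have hset : {i : Fin l.length | l.get i = 1 ∧ (∃ j : Fin l.length, j < i ∧ l.get j = 2) ∧
      (∃ j : Fin l.length, i < j ∧ l.get j = 2)} = e '' {j : Fin M.length | M.get j = 1} := by
    ext ⟨i, hi⟩
    simp only [Set.mem_ofPred_eq, Set.mem_image, List.get_eq_getElem, Fin.exists_iff, Fin.lt_def]
    constructor
    · rintro ⟨h1, ⟨j, hj, hji, hj2⟩, ⟨j', hj', hij', hj'2⟩⟩
      have := htwo j hj hj2
      have := htwo j' hj' hj'2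
      obtain ⟨m, rfl⟩ : ∃ m, i = a + 1 + m := ⟨i - (a + 1), by omega⟩
      exact ⟨m, by omega, hmid m _ ▸ h1, rfl⟩
    · rintro ⟨m, hm, h1, he⟩
      obtain rfl : a + 1 + m = i := congrArg Fin.val he
      exact ⟨(hmid m hm).trans h1, ⟨a, by omega, by omega, hfirst⟩,
        ⟨a + 1 + M.length, by omega, by omega, hlast⟩⟩
  rw [waterCells, hset, Set.ncard_image_of_injective _ he, List.ncard_get_eq]

lemma framed_injective :
    Function.Injective fun p : ℕ × ℕ × List ℕ => framed p.1 p.2.1 p.2.2 := by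
  rintro ⟨a, b, M⟩ ⟨a', b', M'⟩ h
  obtain ⟨rfl, h⟩ := List.replicate_append_cons_inj (by decide) h
  have h := congrArg List.reverse h
  simp only [List.reverse_append, List.reverse_cons, List.reverse_replicate, List.append_assoc,
    List.singleton_append] at h
  obtain ⟨rfl, h⟩ := List.replicate_append_cons_inj (by decide) h
  simp_all

lemma exists_eq_replicate_one_append_two_cons {l : List ℕ} (hl : Parts12 l) (h2 : 2 ∈ l) :
    ∃ a t, l = List.replicate a 1 ++ 2 :: t := by
  induction l with
  | nil => simp at h2
  | cons x l ih =>
    rw [parts12_cons] at hl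
    rcases hl.1 with rfl | rfl
    · obtain ⟨a, t, rfl⟩ := ih hl.2 (by simpa using h2)
      exact ⟨a + 1, t, rfl⟩
    · exact ⟨0, l, rfl⟩

lemma exists_eq_framed {l : List ℕ} (hl : Parts12 l) (h2 : 2 ≤ l.count 2) :
    ∃ a b M, l = framed a b M := by
  obtain ⟨a, t, rfl⟩ :=
    exists_eq_replicate_one_append_two_cons hl (List.count_pos_iff.mp (by omega))
  have ht : 2 ∈ t.reverse := by grind [List.count_cons_self, List.count_pos_iff]
  obtain ⟨b, s, hs⟩ := exists_eq_replicate_one_append_two_cons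
    (fun x hx => hl x (by simp_all)) ht
  refine ⟨a, b, s.reverse, ?_⟩
  rw [framed, ← List.reverse_reverse t, hs]
  simp

end Framed

lemma two_le_count_two_of_waterCells_pos {l : List ℕ} (h : 0 < waterCells l) :
    2 ≤ l.count 2 := by
  obtain ⟨_, -, ⟨j, hji, hj⟩, ⟨j', hij', hj'⟩⟩ := Set.nonempty_of_ncard_ne_zero h.ne'
  exact List.duplicate_iff_two_le_count.mp
    (List.duplicate_iff_exists_distinct_get.mpr ⟨j, j', hji.trans hij', hj.symm, hj'.symm⟩)

lemma setOf_waterCells_eq_image_framed {k : ℕ} (hk : 1 ≤ k) :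
    {l | Parts12 l ∧ waterCells l = k} =
      (fun p : ℕ × ℕ × List ℕ => framed p.1 p.2.1 p.2.2) ''
        (Set.univ ×ˢ (Set.univ ×ˢ wordsWithOnes k)) := by
  ext l
  constructor
  · rintro ⟨hl, hwl⟩
    obtain ⟨a, b, M, rfl⟩ := exists_eq_framed hl (two_le_count_two_of_waterCells_pos (by omega))
    exact ⟨(a, b, M), ⟨trivial, trivial, (parts12_framed_iff a b M).mp hl,
      (waterCells_framed a b M).symm.trans hwl⟩, rfl⟩
  · rintro ⟨⟨a, b, M⟩, ⟨-, -, hM, hMk⟩, rfl⟩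
    exact ⟨(parts12_framed_iff a b M).mpr hM, (waterCells_framed a b M).trans hMk⟩

lemma finiteFibers_id_univ : FiniteFibers id (Set.univ : Set ℕ) := fun n =>
  (Set.finite_singleton n).subset fun _ hx => hx.2

lemma weightSeries_id_univ : weightSeries id (Set.univ : Set ℕ) = mk 1 := by
  ext n
  simp

lemma mk_w_eq_weightSeries (k : ℕ) :
    mk (fun n => (w n k : ℚ)) = weightSeries List.sum {l | Parts12 l ∧ waterCells l = k} := by
  ext n
  simp only [coeff_mk, coeff_weightSeries, w, Set.mem_ofPred_eq]
  congr 3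
  ext l
  tauto

theorem stmt7 (k : ℕ) (hk : 1 ≤ k) :
    PowerSeries.mk (fun n => (w n k : ℚ)) =
      q ^ (k + 4) * ((1 - q) ^ 2 * (1 - q ^ 2) ^ (k + 1))⁻¹ := by
  have hN := finiteFibers_id_univ
  have hW := finiteFibers_wordsWithOnes k
  have hgen : mk (fun n => (w n k : ℚ)) =
      X ^ 4 * (mk 1 * (mk 1 * weightSeries List.sum (wordsWithOnes k))) := calc
    _ = weightSeries List.sum ((fun p : ℕ × ℕ × List ℕ => framed p.1 p.2.1 p.2.2) ''
          (Set.univ ×ˢ (Set.univ ×ˢ wordsWithOnes k))) := by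
      rw [mk_w_eq_weightSeries, setOf_waterCells_eq_image_framed hk]
    _ = X ^ 4 * weightSeries (fun p : ℕ × ℕ × List ℕ => p.1 + (p.2.1 + p.2.2.sum))
          (Set.univ ×ˢ (Set.univ ×ˢ wordsWithOnes k)) :=
      weightSeries_image 4 framed_injective.injOn fun p _ => sum_framed p.1 p.2.1 p.2.2
    _ = _ := by
      rw [← weightSeries_id_univ, ← weightSeries_prod hN hW,
        ← weightSeries_prod hN (hN.prod hW)]
      rfl
  rw [hgen, q, PowerSeries.eq_mul_inv_iff_mul_eq (by simp)]
  have h1 := mk_one_mul_one_sub_eq_one ℚ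
  linear_combination X ^ 4 * (mk 1 * (1 - X) + 1) * weightSeries List.sum (wordsWithOnes k) *
    (1 - X ^ 2) ^ (k + 1) * h1 + X ^ 4 * weightSeries_wordsWithOnes_mul k
end

section
/- For every k ≥ 1, the unique minimal composition with parts in {1,2} having exactly k water cells is (2, 1^k, 2): that is, w(n,k) = 0 for all n < k+4, and w(k+4, k) = 1. -/
/-! A water cell has a 2 somewhere on each side. These two 2s, together with the `k` water
cells (each a 1), already contribute `k + 4` to the sum. If the sum is exactly `k + 4`, positivity
of the parts leaves no room for anything else: the two 2s are the ends of the composition and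
every position between them is a water cell. -/

open Finset

def waterSet (l : List ℕ) : Finset (Fin l.length) :=
  {i | l.get i = 1 ∧ (∃ j, j < i ∧ l.get j = 2) ∧ ∃ j, i < j ∧ l.get j = 2}

lemma mem_waterSet {l : List ℕ} {i : Fin l.length} :
    i ∈ waterSet l ↔
      l.get i = 1 ∧ (∃ j, j < i ∧ l.get j = 2) ∧ ∃ j, i < j ∧ l.get j = 2 := by
  simp [waterSet]

lemma waterCells_eq_card_waterSet (l : List ℕ) : waterCells l = #(waterSet l) := by
  rw [waterCells, ← Set.ncard_coe_finset]
  congr 1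
  ext i
  simp [waterSet]

lemma sum_univ_get (l : List ℕ) : ∑ i, l.get i = l.sum :=
  Fin.sum_univ_getElem l

lemma sum_get_le_sum (l : List ℕ) (s : Finset (Fin l.length)) : ∑ i ∈ s, l.get i ≤ l.sum :=
  sum_univ_get l ▸ sum_le_sum_of_subset (subset_univ s)

lemma eq_univ_of_sum_get_eq_sum {l : List ℕ} (hpos : ∀ x ∈ l, 0 < x)
    {s : Finset (Fin l.length)} (hs : ∑ i ∈ s, l.get i = l.sum) : s = univ := by
  refine eq_univ_of_forall fun i => ?_
  by_contra hi
  have hlt : ∑ j ∈ s, l.get j < ∑ j, l.get j :=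
    sum_lt_sum_of_subset (subset_univ s) (mem_univ i) hi (hpos _ (List.get_mem l i))
      fun _ _ _ => Nat.zero_le _
  rw [sum_univ_get] at hlt
  omega

def twoOnesTwo (k : ℕ) : List ℕ := 2 :: (List.replicate k 1 ++ [2])

lemma length_twoOnesTwo (k : ℕ) : (twoOnesTwo k).length = k + 2 := by
  simp [twoOnesTwo]

lemma getElem_twoOnesTwo (k m : ℕ) (h : m < (twoOnesTwo k).length) :
    (twoOnesTwo k)[m] = if m = 0 ∨ m = k + 1 then 2 else 1 := by
  rw [length_twoOnesTwo] at h
  rcases m with _ | m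
  · simp [twoOnesTwo]
  · simp only [twoOnesTwo, List.getElem_cons_succ, List.getElem_append, List.length_replicate,
      List.getElem_replicate]
    split_ifs <;> simp_all; omega

lemma sum_twoOnesTwo (k : ℕ) : (twoOnesTwo k).sum = k + 4 := by
  simp [twoOnesTwo, List.sum_replicate]
  omega

lemma parts12_twoOnesTwo (k : ℕ) : Parts12 (twoOnesTwo k) := by
  intro x hx
  simp only [twoOnesTwo, List.mem_cons, List.mem_append, List.mem_replicate] at hx
  aesop

lemma waterSet_twoOnesTwo (k : ℕ) :
    waterSet (twoOnesTwo k) =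
      Ioo ⟨0, by simp [length_twoOnesTwo]⟩ ⟨k + 1, by simp [length_twoOnesTwo]⟩ := by
  ext i
  have hi : i.val < k + 2 := length_twoOnesTwo k ▸ i.isLt
  simp only [mem_waterSet, mem_Ioo, Fin.lt_def, List.get_eq_getElem, getElem_twoOnesTwo]
  constructor
  · rintro ⟨h1, -, -⟩
    split_ifs at h1 with h <;> omega
  · rintro ⟨h0, hk⟩
    refine ⟨if_neg (by omega), ⟨⟨0, by simp [length_twoOnesTwo]⟩, h0, by simp⟩,
      ⟨k + 1, by simp [length_twoOnesTwo]⟩, hk, by simp⟩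

lemma waterCells_twoOnesTwo (k : ℕ) : waterCells (twoOnesTwo k) = k := by
  rw [waterCells_eq_card_waterSet, waterSet_twoOnesTwo, Fin.card_Ioo]
  simp

lemma exists_two_lt_two_of_waterCells_pos {l : List ℕ} (hw : 0 < waterCells l) :
    ∃ a b : Fin l.length, a < b ∧ l.get a = 2 ∧ l.get b = 2 := by
  rw [waterCells_eq_card_waterSet, card_pos] at hw
  obtain ⟨i, hi⟩ := hw
  obtain ⟨-, ⟨a, hai, ha⟩, b, hib, hb⟩ := mem_waterSet.1 hi
  exact ⟨a, b, hai.trans hib, ha, hb⟩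

lemma sum_insert_insert_waterSet {l : List ℕ} {a b : Fin l.length} (hab : a ≠ b)
    (ha : l.get a = 2) (hb : l.get b = 2) :
    ∑ i ∈ insert a (insert b (waterSet l)), l.get i = waterCells l + 4 := by
  have hnot : ∀ j, l.get j = 2 → j ∉ waterSet l := fun j hj h => by
    have := (mem_waterSet.1 h).1
    omega
  rw [sum_insert (by simp [hab, hnot a ha]), sum_insert (hnot b hb),
    sum_congr rfl fun i hi => (mem_waterSet.1 hi).1, sum_const, smul_eq_mul, mul_one,
    ← waterCells_eq_card_waterSet, ha, hb]
  ring

lemma waterCells_add_four_le_sum {l : List ℕ} (hw : 0 < waterCells l) :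
    waterCells l + 4 ≤ l.sum := by
  obtain ⟨a, b, hab, ha, hb⟩ := exists_two_lt_two_of_waterCells_pos hw
  exact sum_insert_insert_waterSet hab.ne ha hb ▸ sum_get_le_sum l _

lemma waterSet_eq_Ioo_of_cover {l : List ℕ} {a b : Fin l.length} (hab : a < b)
    (hcover : ∀ i, i = a ∨ i = b ∨ i ∈ waterSet l) : waterSet l = Ioo a b := by
  have htwo : ∀ j, l.get j = 2 → j = a ∨ j = b := fun j hj => by
    rcases hcover j with h | h | h
    · exact .inl h
    · exact .inr h
    · have := (mem_waterSet.1 h).1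
      omega
  ext i
  constructor
  · intro hi
    obtain ⟨-, ⟨p, hpi, hp⟩, q, hiq, hq⟩ := mem_waterSet.1 hi
    rw [mem_Ioo]
    rcases htwo p hp with rfl | rfl <;> rcases htwo q hq with rfl | rfl <;>
      first | exact ⟨hpi, hiq⟩ | order
  · intro hi
    obtain ⟨hai, hib⟩ := mem_Ioo.1 hi
    exact ((hcover i).resolve_left hai.ne').resolve_left hib.ne

lemma eq_twoOnesTwo_of_cover {l : List ℕ} {a b : Fin l.length} (hab : a < b)
    (ha : l.get a = 2) (hb : l.get b = 2) (hcover : ∀ i, i = a ∨ i = b ∨ i ∈ waterSet l) :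
    l = twoOnesTwo (waterCells l) := by
  have hwater := waterSet_eq_Ioo_of_cover hab hcover
  have hIcc : ∀ i, a ≤ i ∧ i ≤ b := fun i => by
    rcases hcover i with rfl | rfl | h
    · exact ⟨le_rfl, hab.le⟩
    · exact ⟨hab.le, le_rfl⟩
    · obtain ⟨hai, hib⟩ := mem_Ioo.1 (hwater ▸ h)
      exact ⟨hai.le, hib.le⟩
  have ha0 : a.val = 0 := by
    have : a.val ≤ 0 := (hIcc ⟨0, by omega⟩).1
    omega
  have hblast : b.val = l.length - 1 := by
    have : l.length - 1 ≤ b.val := (hIcc ⟨l.length - 1, by omega⟩).2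
    omega
  have hk : waterCells l + 2 = l.length := by
    rw [waterCells_eq_card_waterSet, hwater, Fin.card_Ioo]
    omega
  refine List.ext_getElem (by rw [length_twoOnesTwo, hk]) fun m hm _ => ?_
  rw [getElem_twoOnesTwo]
  change l.get ⟨m, hm⟩ = _
  split_ifs with hend
  · rcases hend with h | h
    · rwa [show (⟨m, hm⟩ : Fin l.length) = a from Fin.ext (show m = a.val by omega)]
    · rwa [show (⟨m, hm⟩ : Fin l.length) = b from Fin.ext (show m = b.val by omega)]
  · have hin : (⟨m, hm⟩ : Fin l.length) ∈ Ioo a b :=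
      mem_Ioo.2 ⟨show a.val < m by omega, show m < b.val by omega⟩
    exact (mem_waterSet.1 (hwater ▸ hin)).1

lemma eq_twoOnesTwo_of_sum_eq {l : List ℕ} (h12 : Parts12 l) (hw : 0 < waterCells l)
    (hs : l.sum = waterCells l + 4) : l = twoOnesTwo (waterCells l) := by
  obtain ⟨a, b, hab, ha, hb⟩ := exists_two_lt_two_of_waterCells_pos hw
  have hpos : ∀ x ∈ l, 0 < x := fun x hx => by
    have := h12 x hx
    omega
  have hcover :=
    eq_univ_of_sum_get_eq_sum hpos ((sum_insert_insert_waterSet hab.ne ha hb).trans hs.symm)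
  refine eq_twoOnesTwo_of_cover hab ha hb fun i => ?_
  have hi : i ∈ insert a (insert b (waterSet l)) := hcover ▸ mem_univ i
  simpa only [mem_insert] using hi

theorem stmt8 (k : ℕ) (hk : 1 ≤ k) :
    (∀ n < k + 4, w n k = 0) ∧ w (k + 4) k = 1 := by
  refine ⟨fun n hn => ?_, ?_⟩
  · have hempty : {l : List ℕ | Parts12 l ∧ l.sum = n ∧ waterCells l = k} = ∅ := by
      refine Set.eq_empty_of_forall_notMem fun l ⟨_, hsum, hwc⟩ => ?_
      have := waterCells_add_four_le_sum (l := l) (by omega)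
      omega
    rw [w, hempty, Set.ncard_empty]
  · have hsingleton :
        {l : List ℕ | Parts12 l ∧ l.sum = k + 4 ∧ waterCells l = k} = {twoOnesTwo k} := by
      ext l
      refine ⟨fun ⟨h12, hsum, hwc⟩ => ?_, ?_⟩
      · subst hwc
        exact eq_twoOnesTwo_of_sum_eq h12 (by omega) hsum
      · rintro rfl
        exact ⟨parts12_twoOnesTwo k, sum_twoOnesTwo k, waterCells_twoOnesTwo k⟩
    rw [w, hsingleton, Set.ncard_singleton]
end

section
/- For every n ≥ 0, the diagonal sum d(n) = ∑_{k≥0} w(n-k, k) equals the number of compositions of n in which every internal part (every part other than the first and last) is even. -/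
open List

lemma Set.ncard_eq_sum_range_ncard_fiber {α : Type*} {s : Set α} (hs : s.Finite) {f : α → ℕ}
    {n : ℕ} (hf : ∀ x ∈ s, f x ≤ n) :
    s.ncard = ∑ k ∈ Finset.range (n + 1), {x ∈ s | f x = k}.ncard := by
  classical
  rw [Set.ncard_eq_toFinset_card s hs,
    Finset.card_eq_sum_card_fiberwise (f := f) (t := Finset.range (n + 1))]
  · refine Finset.sum_congr rfl fun k _ => ?_
    rw [← Set.ncard_coe_finset]
    congr
    ext
    simp
  · intro x hx
    simpa [Nat.lt_succ_iff] using hf x (by simpa using hx)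

lemma finite_setOf_isComposition (m : ℕ) : {l | IsComposition m l}.Finite :=
  (Set.finite_range Composition.blocks).subset fun l hl => ⟨⟨l, hl.1 _, hl.2⟩, rfl⟩

lemma d_eq_ncard (n : ℕ) :
    d n = {l : List ℕ | Parts12 l ∧ l.sum + waterCells l = n}.ncard := by
  have hfin : {l : List ℕ | Parts12 l ∧ l.sum + waterCells l = n}.Finite := by
    refine ((Set.finite_Iic n).biUnion fun m _ => finite_setOf_isComposition m).subset ?_
    rintro l ⟨hl, hsum⟩
    simp only [Set.mem_iUnion]
    refine ⟨l.sum, by simp; omega, fun x hx => ?_, rfl⟩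
    rcases hl x hx with rfl | rfl <;> norm_num
  rw [d, Set.ncard_eq_sum_range_ncard_fiber hfin (f := waterCells) (n := n)
    fun l hl => by have := hl.2; omega]
  refine Finset.sum_congr rfl fun k hk => ?_
  rw [w]
  congr
  ext l
  simp only [Finset.mem_range] at hk
  simp only [Set.mem_ofPred_eq]
  constructor
  · rintro ⟨hl, hsum, rfl⟩
    exact ⟨⟨hl, by omega⟩, rfl⟩
  · rintro ⟨⟨hl, hsum⟩, rfl⟩
    exact ⟨hl, by omega, rfl⟩

lemma ncard_setOf_and_eq_of_injective {P α : Type*} {φ : P → α} (hφ : φ.Injective)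
    {Q : α → Prop} (hQ : ∀ x, Q x ↔ ∃ p, φ p = x) (f : α → ℕ) (n : ℕ) :
    {x | Q x ∧ f x = n}.ncard = {p | f (φ p) = n}.ncard := by
  rw [← Set.ncard_image_of_injective _ hφ]
  congr
  ext x
  simp only [hQ, Set.mem_ofPred_eq]
  constructor
  · rintro ⟨⟨p, rfl⟩, hp⟩
    exact ⟨p, hp, rfl⟩
  · rintro ⟨p, hp, rfl⟩
    exact ⟨⟨p, rfl⟩, hp⟩

/-- `waterAux s l` counts the water cells of `l`, where `s` records whether a 2 occurs to the
left of `l`. -/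
def waterAux : Bool → List ℕ → ℕ
  | _, [] => 0
  | s, x :: l => (if x = 1 ∧ s ∧ 2 ∈ l then 1 else 0) + waterAux (s || x == 2) l

lemma sum_waterIndicator_eq_waterAux (s : Bool) (l : List ℕ) :
    ∑ i : Fin l.length, (if l[i] = 1 ∧ (s ∨ ∃ j < i, l[j] = 2) ∧ ∃ j, i < j ∧ l[j] = 2
      then 1 else 0) = waterAux s l := by
  induction l generalizing s with
  | nil => simp [waterAux]
  | cons x l ih =>
    refine (Fin.sum_univ_succ (n := l.length) _).trans ?_
    rw [waterAux, ← ih]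
    congr 1
    · simp [Fin.exists_fin_succ, List.mem_iff_getElem, Fin.exists_iff]
    · simp [Fin.exists_fin_succ, Fin.succ_lt_succ_iff, or_assoc]

lemma waterCells_eq_waterAux (l : List ℕ) : waterCells l = waterAux false l := by
  rw [← sum_waterIndicator_eq_waterAux, waterCells, Set.ncard_eq_toFinset_card',
    Set.toFinset_ofPred, Finset.card_filter]
  simp

lemma waterAux_replicate_append (s : Bool) (m : ℕ) (l : List ℕ) :
    waterAux s (replicate m 1 ++ l) = (if s ∧ 2 ∈ l then m else 0) + waterAux s l := by
  induction m with
  | zero => simp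
  | succ m ih =>
    rw [replicate_succ, cons_append, waterAux, show (s || 1 == 2) = s by simp, ih]
    simp only [true_and, mem_append, mem_replicate, OfNat.ofNat_ne_one, and_false, false_or]
    split_ifs <;> omega

def joinRuns (b : ℕ) : List ℕ → List ℕ
  | [] => replicate b 1
  | m :: ms => replicate m 1 ++ 2 :: joinRuns b ms

lemma waterAux_joinRuns (s : Bool) (b : ℕ) (ms : List ℕ) :
    waterAux s (joinRuns b ms) = if s then ms.sum else ms.tail.sum := by
  induction ms generalizing s with
  | nil => simpa [joinRuns, waterAux] using waterAux_replicate_append s b []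
  | cons m ms ih =>
    cases s <;> simp [joinRuns, waterAux_replicate_append, waterAux, ih]

lemma waterCells_joinRuns (b : ℕ) (ms : List ℕ) : waterCells (joinRuns b ms) = ms.tail.sum := by
  rw [waterCells_eq_waterAux, waterAux_joinRuns, if_neg Bool.false_ne_true]

lemma sum_joinRuns (b : ℕ) (ms : List ℕ) :
    (joinRuns b ms).sum = ms.sum + 2 * ms.length + b := by
  induction ms with
  | nil => simp [joinRuns]
  | cons m ms ih => simp [joinRuns, ih]; ring

lemma parts12_joinRuns (b : ℕ) (ms : List ℕ) : Parts12 (joinRuns b ms) := by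
  induction ms with
  | nil => simp [Parts12, joinRuns]
  | cons m ms ih =>
    intro x hx
    simp only [joinRuns, mem_append, mem_replicate, mem_cons] at hx
    rcases hx with ⟨-, rfl⟩ | rfl | hx
    exacts [Or.inl rfl, Or.inr rfl, ih x hx]

lemma replicate_append_two_cons_inj {m m' : ℕ} {l l' : List ℕ}
    (h : replicate m 1 ++ 2 :: l = replicate m' 1 ++ 2 :: l') : m = m' ∧ l = l' := by
  induction m generalizing m' with
  | zero => cases m' <;> simp_all [replicate_succ]
  | succ m ih => cases m' <;> simp_all [replicate_succ]

lemma replicate_ne_replicate_append_two_cons (b m : ℕ) (l : List ℕ) :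
    replicate b 1 ≠ replicate m 1 ++ 2 :: l := by
  intro h
  have : 2 ∈ replicate b 1 := h ▸ by simp
  simp at this

lemma joinRuns_inj {b b' : ℕ} {ms ms' : List ℕ} (h : joinRuns b ms = joinRuns b' ms') :
    b = b' ∧ ms = ms' := by
  induction ms generalizing ms' with
  | nil =>
    cases ms' with
    | nil => simpa [joinRuns] using h
    | cons m' ms' => exact (replicate_ne_replicate_append_two_cons _ _ _ h).elim
  | cons m ms ih =>
    cases ms' with
    | nil => exact (replicate_ne_replicate_append_two_cons _ _ _ h.symm).elim
    | cons m' ms' =>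
      obtain ⟨rfl, hrest⟩ := replicate_append_two_cons_inj h
      obtain ⟨rfl, rfl⟩ := ih hrest
      exact ⟨rfl, rfl⟩

lemma parts12_iff_exists_joinRuns (l : List ℕ) : Parts12 l ↔ ∃ b ms, joinRuns b ms = l := by
  refine ⟨fun hl => ?_, fun ⟨b, ms, h⟩ => h ▸ parts12_joinRuns b ms⟩
  induction l with
  | nil => exact ⟨0, [], rfl⟩
  | cons x l ih =>
    obtain ⟨b, ms, rfl⟩ := ih fun y hy => hl y (mem_cons_of_mem x hy)
    rcases hl x mem_cons_self with rfl | rfl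
    · cases ms with
      | nil => exact ⟨b + 1, [], by simp [joinRuns, replicate_succ]⟩
      | cons m ms => exact ⟨b, (m + 1) :: ms, by simp [joinRuns, replicate_succ]⟩
    · exact ⟨b, 0 :: ms, rfl⟩

def runsComposition (b : ℕ) : List ℕ → List ℕ
  | [] => if b = 0 then [] else [b]
  | a :: mids => (a + 1) :: (mids.map (fun m => 2 * m + 2) ++ [b + 1])

lemma sum_runsComposition (b : ℕ) (ms : List ℕ) :
    (runsComposition b ms).sum = ms.sum + 2 * ms.length + b + ms.tail.sum := by
  cases ms with
  | nil => unfold runsComposition; split_ifs <;> simp_all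
  | cons a mids =>
    have hmids : (mids.map (fun m => 2 * m + 2)).sum = 2 * mids.sum + 2 * mids.length := by
      induction mids with
      | nil => rfl
      | cons m mids ih => simp only [map_cons, sum_cons, ih, length_cons]; ring
    simp only [runsComposition, sum_cons, sum_append, hmids, sum_nil, tail_cons, length_cons]
    ring

lemma runsComposition_inj {b b' : ℕ} {ms ms' : List ℕ}
    (h : runsComposition b ms = runsComposition b' ms') : b = b' ∧ ms = ms' := by
  cases ms with
  | nil =>
    cases ms' with
    | nil => unfold runsComposition at h; split_ifs at h <;> simp_all
    | cons a' mids' =>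
      have := congrArg length h
      unfold runsComposition at this; split_ifs at this <;> simp at this
  | cons a mids =>
    cases ms' with
    | nil =>
      have := congrArg length h
      unfold runsComposition at this; split_ifs at this <;> simp at this
    | cons a' mids' =>
      simp only [runsComposition, cons.injEq, add_left_inj] at h
      obtain ⟨rfl, h⟩ := h
      obtain ⟨hmid, hb⟩ := append_inj' h rfl
      have hinj : Function.Injective fun m : ℕ => 2 * m + 2 := fun x y hxy => by
        simp only at hxy; omega
      exact ⟨by simpa using hb, by rw [map_injective_iff.mpr hinj hmid]⟩

lemma internalEven_cons_append_singleton (a b : ℕ) (mids : List ℕ) :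
    InternalEven (a :: (mids ++ [b])) ↔ ∀ x ∈ mids, Even x := by
  simp [InternalEven]

lemma pos_and_internalEven_iff_exists_runsComposition (c : List ℕ) :
    (∀ x ∈ c, 0 < x) ∧ InternalEven c ↔ ∃ b ms, runsComposition b ms = c := by
  constructor
  · rintro ⟨hpos, hev⟩
    rcases c with _ | ⟨p, t⟩
    · exact ⟨0, [], rfl⟩
    rcases eq_nil_or_concat' t with rfl | ⟨mids, q, rfl⟩
    · exact ⟨p, [], if_neg (hpos p mem_cons_self).ne'⟩
    refine ⟨q - 1, (p - 1) :: mids.map (fun x => x / 2 - 1), ?_⟩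
    rw [internalEven_cons_append_singleton] at hev
    have hp := hpos p (by simp)
    have hq := hpos q (by simp)
    simp only [runsComposition, map_map, Nat.sub_add_cancel hp, Nat.sub_add_cancel hq]
    congr 2
    refine (map_congr_left fun x hx => ?_).trans (map_id mids)
    obtain ⟨k, rfl⟩ := hev x hx
    have : 0 < k + k := hpos _ (by simp [hx])
    simp only [Function.comp_apply, id_eq]
    omega
  · rintro ⟨b, _ | ⟨a, mids⟩, rfl⟩
    · by_cases hb : b = 0 <;> simp [runsComposition, hb, InternalEven]
      omega
    · refine ⟨fun x hx => ?_, ?_⟩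
      · simp only [runsComposition, mem_cons, mem_append, mem_map, not_mem_nil, or_false] at hx
        rcases hx with rfl | ⟨m, -, rfl⟩ | rfl <;> omega
      rw [runsComposition, internalEven_cons_append_singleton]
      simp only [mem_map, forall_exists_index, and_imp, forall_apply_eq_imp_iff₂]
      exact fun m _ => ⟨m + 1, by ring⟩

theorem stmt11 (n : ℕ) :
    d n = {l : List ℕ | IsComposition n l ∧ InternalEven l}.ncard := by
  have hruns : ∀ l, Parts12 l ↔ ∃ p : ℕ × List ℕ, joinRuns p.1 p.2 = l := by
    simp [parts12_iff_exists_joinRuns]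
  have hcomp : ∀ c, (∀ x ∈ c, 0 < x) ∧ InternalEven c ↔
      ∃ p : ℕ × List ℕ, runsComposition p.1 p.2 = c := by
    simp [pos_and_internalEven_iff_exists_runsComposition]
  calc d n = {l | Parts12 l ∧ l.sum + waterCells l = n}.ncard := d_eq_ncard n
    _ = {p : ℕ × List ℕ | (joinRuns p.1 p.2).sum + waterCells (joinRuns p.1 p.2) = n}.ncard :=
      ncard_setOf_and_eq_of_injective (fun p q h => Prod.ext_iff.2 (joinRuns_inj h)) hruns
        (fun l => l.sum + waterCells l) n
    _ = {p : ℕ × List ℕ | (runsComposition p.1 p.2).sum = n}.ncard := by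
      simp only [sum_joinRuns, waterCells_joinRuns, sum_runsComposition]
    _ = {c | ((∀ x ∈ c, 0 < x) ∧ InternalEven c) ∧ c.sum = n}.ncard :=
      (ncard_setOf_and_eq_of_injective (fun p q h => Prod.ext_iff.2 (runsComposition_inj h))
        hcomp sum n).symm
    _ = {l : List ℕ | IsComposition n l ∧ InternalEven l}.ncard := by
      simp only [IsComposition, and_right_comm]
end

section
/- For every n ≥ 1, the number of compositions of n with all parts in {1,2}, zero water cells, and which either equal (1^n) or end with the two parts (2,1), is ⌈n/2⌉. -/
lemma waterCells_eq_zero_iff (l : List ℕ) : waterCells l = 0 ↔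
    ∀ i : Fin l.length, ¬ (l.get i = 1 ∧ (∃ j : Fin l.length, j < i ∧ l.get j = 2) ∧
      (∃ j : Fin l.length, i < j ∧ l.get j = 2)) := by
  rw [waterCells, Set.ncard_eq_zero (Set.toFinite _), Set.eq_empty_iff_forall_notMem]
  simp only [Set.mem_setOf_eq]

lemma get_shape (a b c p : ℕ) (hp : p < (List.replicate a 1 ++ List.replicate b 2 ++ List.replicate c 1).length) :
    (List.replicate a 1 ++ List.replicate b 2 ++ List.replicate c 1)[p] =
      if a ≤ p ∧ p < a + b then 2 else 1 := by
  simp only [List.getElem_append, List.getElem_replicate]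
  simp only [List.length_append, List.length_replicate] at hp ⊢
  split_ifs <;> omega

lemma waterCells_shape (a b c : ℕ) :
    waterCells (List.replicate a 1 ++ List.replicate b 2 ++ List.replicate c 1) = 0 := by
  rw [waterCells_eq_zero_iff]
  rintro i ⟨hi, ⟨j1, hj1, hj1v⟩, ⟨j2, hj2, hj2v⟩⟩
  rw [List.get_eq_getElem, get_shape] at hi hj1v hj2v
  rw [Fin.lt_def] at hj1 hj2
  split_ifs at hi hj1v hj2v with h1 h2 h3 <;> omega

lemma sorted_shape (l : List ℕ) (h12 : Parts12 l) (hp : l.Pairwise (· ≤ ·)) :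
    l = List.replicate (l.count 1) 1 ++ List.replicate (l.count 2) 2 := by
  induction l with
  | nil => simp
  | cons x t ih =>
    rw [List.pairwise_cons] at hp
    rcases h12 x (by simp) with rfl | rfl
    · rw [ih (fun y hy => h12 y (by simp [hy])) hp.2]
      simp [List.replicate_succ, List.count_cons, List.count_replicate]
    · have ht : ∀ y ∈ t, y = 2 := by
        intro y hy
        rcases h12 y (by simp [hy]) with rfl | rfl
        · exact absurd (hp.1 1 hy) (by norm_num)
        · rfl
      have hlen : t = List.replicate t.length 2 := List.eq_replicate_of_mem ht
      rw [hlen]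
      simp [List.count_cons, List.count_replicate, List.replicate_succ]

def ff (n k : ℕ) : List ℕ :=
  if k = 0 then List.replicate n 1
  else List.replicate (n - 1 - 2 * k) 1 ++ List.replicate (k - 1) 2 ++ [2, 1]

lemma ff_shape (n k : ℕ) (hk : 1 ≤ k) :
    ff n k = List.replicate (n - 1 - 2 * k) 1 ++ List.replicate k 2 ++ List.replicate 1 1 := by
  rw [ff, if_neg (by omega)]
  have : List.replicate k 2 = List.replicate (k-1) 2 ++ [2] := by
    conv_lhs => rw [show k = (k-1) + 1 by omega]
    rw [List.replicate_succ']
  rw [this]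
  simp

lemma ff_count2 (n k : ℕ) : (ff n k).count 2 = k := by
  rcases Nat.eq_zero_or_pos k with rfl | hk
  · simp [ff, List.count_replicate]
  · rw [ff_shape n k hk]
    simp [List.count_replicate]

theorem stmt16 (n : ℕ) (hn : 1 ≤ n) :
    {l : List ℕ | Parts12 l ∧ l.sum = n ∧ waterCells l = 0 ∧
      (l = List.replicate n 1 ∨ ∃ l' : List ℕ, l = l' ++ [2, 1])}.ncard = (n + 1) / 2 := by
  have hset : {l : List ℕ | Parts12 l ∧ l.sum = n ∧ waterCells l = 0 ∧
      (l = List.replicate n 1 ∨ ∃ l' : List ℕ, l = l' ++ [2, 1])}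
      = ↑((Finset.range ((n+1)/2)).image (ff n)) := by
    ext l
    simp only [Set.mem_setOf_eq, Finset.coe_image, Set.mem_image, Finset.mem_coe,
      Finset.mem_range]
    constructor
    · rintro ⟨h12, hsum, hw, (rfl | ⟨l', rfl⟩)⟩
      · exact ⟨0, by omega, by simp [ff]⟩
      · have h12' : Parts12 l' := fun x hx => h12 x (by simp [hx])
        have hlen : (l' ++ [2,1]).length = l'.length + 2 := by simp
        rw [waterCells_eq_zero_iff] at hw
        have hpair : l'.Pairwise (· ≤ ·) := by
          rw [List.pairwise_iff_getElem]
          intro i j hi hj hij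
          show l'[i] ≤ l'[j]
          rcases h12' l'[i] (List.getElem_mem hi) with h1 | h1
          · rw [h1]
            rcases h12' l'[j] (List.getElem_mem hj) with h2 | h2 <;> rw [h2] <;> norm_num
          rcases h12' l'[j] (List.getElem_mem hj) with h2 | h2
          · exfalso
            refine hw ⟨j, by rw [hlen]; omega⟩ ⟨?_, ⟨⟨i, by rw [hlen]; omega⟩,
              Fin.mk_lt_mk.mpr hij, ?_⟩,
              ⟨⟨l'.length, by rw [hlen]; omega⟩, Fin.mk_lt_mk.mpr hj, ?_⟩⟩
            · rw [List.get_eq_getElem, List.getElem_append_left hj]; exact h2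
            · rw [List.get_eq_getElem, List.getElem_append_left hi]; exact h1
            · rw [List.get_eq_getElem, List.getElem_append_right (le_refl _)]
              simp
          · rw [h1, h2]
        have hshape := sorted_shape l' h12' hpair
        set a := l'.count 1 with ha
        set b := l'.count 2 with hb
        have hsum' : a + 2 * b + 3 = n := by
          rw [List.sum_append, hshape] at hsum
          simp only [List.sum_append, List.sum_replicate, smul_eq_mul] at hsum
          simp at hsum
          omega
        refine ⟨b + 1, by omega, ?_⟩
        rw [ff, if_neg (by omega), show b + 1 - 1 = b from rfl,
          show n - 1 - 2 * (b + 1) = a from by omega, hshape]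
    · rintro ⟨k, hk, rfl⟩
      rcases Nat.eq_zero_or_pos k with rfl | hk1
      · refine ⟨?_, by simp [ff], ?_, Or.inl (by simp [ff])⟩
        · intro x hx
          rw [ff, if_pos rfl] at hx
          exact Or.inl (List.eq_of_mem_replicate hx)
        · have h := waterCells_shape n 0 0
          simpa [ff] using h
      · have hle : 2 * k + 1 ≤ n := by omega
        refine ⟨?_, ?_, ?_, Or.inr ⟨List.replicate (n - 1 - 2*k) 1 ++ List.replicate (k-1) 2, ?_⟩⟩
        · rw [ff_shape n k hk1]
          intro x hx
          simp only [List.mem_append, List.mem_replicate] at hx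
          rcases hx with (h | h) | h <;> omega
        · rw [ff_shape n k hk1]
          simp only [List.sum_append, List.sum_replicate, smul_eq_mul]
          omega
        · rw [ff_shape n k hk1]; exact waterCells_shape _ _ _
        · rw [ff, if_neg (by omega), List.append_assoc]
  rw [hset, Set.ncard_coe_finset,
    Finset.card_image_of_injective _ (fun x y h => by
      rw [← ff_count2 n x, ← ff_count2 n y, h]),
    Finset.card_range]
end

section
/- Let r(n) := ∑_{k≥1} w(n+4, k) be the number of compositions of n+4 with parts in {1,2} having at least one water cell. Then ∑_{m≥0} r(m+1) t^m, i.e. ∑_{m≥0} (number of compositions of m+5 with parts in {1,2} and at least one water cell) t^m, equals 1/((1-t)²(1-t²)(1-t-t²)) as formal power series. -/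
def Sset (n : ℕ) : Set (List ℕ) := {l | Parts12 l ∧ l.sum = n}

lemma Sset_zero : Sset 0 = {([] : List ℕ)} := by
  ext l
  simp only [Sset, Set.mem_setOf_eq, Set.mem_singleton_iff]
  constructor
  · rintro ⟨h1, h2⟩
    cases l with
    | nil => rfl
    | cons x t =>
      rcases h1 x (by simp) with rfl | rfl <;> simp at h2 <;> omega
  · rintro rfl; exact ⟨by simp [Parts12], rfl⟩

lemma Sset_one : Sset 1 = {([1] : List ℕ)} := by
  ext l
  simp only [Sset, Set.mem_setOf_eq, Set.mem_singleton_iff]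
  constructor
  · rintro ⟨h1, h2⟩
    cases l with
    | nil => simp at h2
    | cons x t =>
      rcases h1 x (by simp) with rfl | rfl
      · simp at h2
        have : t = [] := by
          cases t with
          | nil => rfl
          | cons y s => rcases h1 y (by simp) with rfl | rfl <;> simp at h2 <;> omega
        simp [this]
      · simp at h2; omega
  · rintro rfl; exact ⟨by simp [Parts12], rfl⟩

lemma Sset_succ_succ (n : ℕ) :
    Sset (n + 2) = (List.cons 1 '' Sset (n + 1)) ∪ (List.cons 2 '' Sset n) := by
  ext l
  simp only [Sset, Set.mem_setOf_eq, Set.mem_union, Set.mem_image]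
  constructor
  · rintro ⟨h1, h2⟩
    cases l with
    | nil => simp at h2
    | cons x t =>
      have ht : Parts12 t := fun y hy => h1 y (List.mem_cons_of_mem _ hy)
      rcases h1 x (by simp) with rfl | rfl
      · left; exact ⟨t, ⟨ht, by simp at h2; omega⟩, rfl⟩
      · right; exact ⟨t, ⟨ht, by simp at h2; omega⟩, rfl⟩
  · rintro (⟨t, ⟨ht, hs⟩, rfl⟩ | ⟨t, ⟨ht, hs⟩, rfl⟩) <;>
      refine ⟨?_, by simp [hs]; omega⟩ <;>
      intro y hy <;> rcases List.mem_cons.mp hy with rfl | hy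
    · left; rfl
    · exact ht y hy
    · right; rfl
    · exact ht y hy

lemma Sset_finite_card (n : ℕ) : (Sset n).Finite ∧ (Sset n).ncard = Nat.fib (n + 1) := by
  induction n using Nat.strong_induction_on with
  | _ n ih =>
    match n with
    | 0 => simp [Sset_zero]
    | 1 => simp [Sset_one]
    | (n + 2) =>
      obtain ⟨hf1, hc1⟩ := ih (n + 1) (by omega)
      obtain ⟨hf0, hc0⟩ := ih n (by omega)
      have hinj1 : Function.Injective (List.cons 1 : List ℕ → List ℕ) := fun a b h => by
        simpa using h
      have hinj2 : Function.Injective (List.cons 2 : List ℕ → List ℕ) := fun a b h => by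
        simpa using h
      have hdisj : Disjoint (List.cons 1 '' Sset (n + 1)) (List.cons 2 '' Sset n) := by
        rw [Set.disjoint_left]
        rintro l ⟨a, _, rfl⟩ ⟨b, _, h⟩
        simp at h
      rw [Sset_succ_succ]
      constructor
      · exact (hf1.image _).union (hf0.image _)
      · have hfib : Nat.fib (n + 2 + 1) = Nat.fib (n + 1) + Nat.fib (n + 1 + 1) := by
          rw [show n + 2 + 1 = (n + 1) + 2 by omega, Nat.fib_add_two]
        rw [Set.ncard_union_eq hdisj (hf1.image _) (hf0.image _),
          Set.ncard_image_of_injective _ hinj1, Set.ncard_image_of_injective _ hinj2,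
          hc1, hc0]
        omega

open List

lemma water_pos_iff (l : List ℕ) : 1 ≤ waterCells l ↔ [2, 1, 2] <+ l := by
  have hfin : ({i : Fin l.length | l.get i = 1 ∧ (∃ j : Fin l.length, j < i ∧ l.get j = 2) ∧
      (∃ j : Fin l.length, i < j ∧ l.get j = 2)}).Finite := Set.toFinite _
  rw [waterCells, Nat.one_le_iff_ne_zero, Ne, Set.ncard_eq_zero hfin,
    ← Ne, ← Set.nonempty_iff_ne_empty]
  constructor
  · rintro ⟨i, hi1, ⟨j, hji, hj2⟩, ⟨k, hik, hk2⟩⟩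
    rw [sublist_iff_exists_fin_orderEmbedding_get_eq]
    have hmono : StrictMono (fun x : Fin 3 =>
        if x = 0 then j else if x = 1 then i else k) := by
      intro a b hab
      fin_cases a <;> fin_cases b <;> simp_all <;> omega
    refine ⟨OrderEmbedding.ofStrictMono _ hmono, ?_⟩
    intro ix
    fin_cases ix <;> simp_all
  · intro h
    rw [sublist_iff_exists_fin_orderEmbedding_get_eq] at h
    obtain ⟨f, hf⟩ := h
    refine ⟨f ⟨1, by simp⟩, ?_, ⟨f ⟨0, by simp⟩, ?_, ?_⟩, ⟨f ⟨2, by simp⟩, ?_, ?_⟩⟩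
    · exact (hf ⟨1, by simp⟩).symm
    · exact f.strictMono (by simp [Fin.lt_def])
    · exact (hf ⟨0, by simp⟩).symm
    · exact f.strictMono (by simp [Fin.lt_def])
    · exact (hf ⟨2, by simp⟩).symm

lemma water_zero_iff (l : List ℕ) : waterCells l = 0 ↔ ¬ [2, 1, 2] <+ l := by
  rw [← water_pos_iff]; omega

lemma no12_shape (l : List ℕ) (hp : Parts12 l) (h : ¬ [1, 2] <+ l) :
    ∃ b c, l = replicate b 2 ++ replicate c 1 := by
  induction l with
  | nil => exact ⟨0, 0, rfl⟩
  | cons x t ih =>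
    have hpt : Parts12 t := fun y hy => hp y (mem_cons_of_mem _ hy)
    have hnt : ¬ [1, 2] <+ t := fun hs => h (hs.trans (sublist_cons_self x t))
    rcases hp x (by simp) with rfl | rfl
    · -- head 1: t contains no 2
      have h2 : (2 : ℕ) ∉ t := by
        intro h2
        exact h ((cons_sublist_cons.mpr (singleton_sublist.mpr h2)))
      have : t = replicate t.length 1 := by
        rw [eq_replicate_iff]
        exact ⟨rfl, fun y hy => (hpt y hy).resolve_right (fun h' => h2 (h' ▸ hy))⟩
      refine ⟨0, t.length + 1, ?_⟩
      rw [replicate, List.nil_append, List.replicate_succ]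
      exact congrArg _ this
    · obtain ⟨b, c, rfl⟩ := ih hpt hnt
      exact ⟨b + 1, c, by simp [replicate_succ]⟩

lemma no212_shape (l : List ℕ) (hp : Parts12 l) (h : ¬ [2, 1, 2] <+ l) :
    ∃ a b c, l = replicate a 1 ++ replicate b 2 ++ replicate c 1 := by
  induction l with
  | nil => exact ⟨0, 0, 0, rfl⟩
  | cons x t ih =>
    have hpt : Parts12 t := fun y hy => hp y (mem_cons_of_mem _ hy)
    have hnt : ¬ [2, 1, 2] <+ t := fun hs => h (hs.trans (sublist_cons_self x t))
    rcases hp x (by simp) with rfl | rfl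
    · obtain ⟨a, b, c, rfl⟩ := ih hpt hnt
      exact ⟨a + 1, b, c, by simp [replicate_succ]⟩
    · have hn12 : ¬ [1, 2] <+ t := fun hs => h (cons_sublist_cons.mpr hs)
      obtain ⟨b, c, rfl⟩ := no12_shape t hpt hn12
      exact ⟨0, b + 1, c, by simp [replicate_succ]⟩

lemma shape_no212 (a b c : ℕ) :
    ¬ [2, 1, 2] <+ replicate a 1 ++ replicate b 2 ++ replicate c 1 := by
  intro h
  rw [sublist_append_iff] at h
  obtain ⟨s, t, hst, hs, ht⟩ := h
  rw [sublist_append_iff] at hs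
  obtain ⟨u, v, huv, hu, hv⟩ := hs
  rw [sublist_replicate_iff] at hu hv ht
  obtain ⟨k1, _, rfl⟩ := hu
  obtain ⟨k2, _, rfl⟩ := hv
  obtain ⟨k3, _, rfl⟩ := ht
  subst huv
  have hlen : k1 + k2 + k3 = 3 := by
    have := congrArg List.length hst
    simp at this
    omega
  have h1 : k1 ≤ 3 := by omega
  have h2 : k2 ≤ 3 := by omega
  have h3 : k3 ≤ 3 := by omega
  interval_cases k1 <;> interval_cases k2 <;> interval_cases k3 <;> simp_all [replicate_succ]


def Zset (n : ℕ) : Set (List ℕ) := {l | Parts12 l ∧ l.sum = n ∧ waterCells l = 0}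

def Hfin (n : ℕ) : Finset (ℕ × ℕ) :=
  (Finset.range (n + 1) ×ˢ Finset.range (n + 1)).filter (fun p => 1 ≤ p.2 ∧ p.1 + 2 * p.2 ≤ n)

def shapeF (n : ℕ) (p : ℕ × ℕ) : List ℕ :=
  replicate p.1 1 ++ replicate p.2 2 ++ replicate (n - (p.1 + 2 * p.2)) 1

lemma mem_Hfin {n : ℕ} {p : ℕ × ℕ} : p ∈ Hfin n ↔ 1 ≤ p.2 ∧ p.1 + 2 * p.2 ≤ n := by
  simp only [Hfin, Finset.mem_filter, Finset.mem_product, Finset.mem_range]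
  omega

lemma parts12_shape (a b c : ℕ) :
    Parts12 (replicate a 1 ++ replicate b 2 ++ replicate c 1) := by
  intro x hx
  simp only [mem_append, mem_replicate] at hx
  omega

lemma sum_shape (a b c : ℕ) :
    (replicate a 1 ++ replicate b 2 ++ replicate c 1).sum = a + 2 * b + c := by
  simp only [List.sum_append, List.sum_replicate, smul_eq_mul]
  omega

lemma Zset_eq (n : ℕ) : Zset n = insert (replicate n 1) (shapeF n '' ↑(Hfin n)) := by
  ext l
  simp only [Zset, Set.mem_setOf_eq, Set.mem_insert_iff, Set.mem_image, Finset.mem_coe]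
  constructor
  · rintro ⟨hp, hs, hw⟩
    rw [water_zero_iff] at hw
    obtain ⟨a, b, c, rfl⟩ := no212_shape l hp hw
    rw [sum_shape] at hs
    rcases Nat.eq_zero_or_pos b with rfl | hb
    · left
      have hac : a + c = n := by omega
      simp [← List.replicate_add, hac]
    · right
      refine ⟨(a, b), mem_Hfin.mpr ⟨hb, by omega⟩, ?_⟩
      simp only [shapeF]
      congr 2
      omega
  · rintro (rfl | ⟨⟨a, b⟩, hab, rfl⟩)
    · refine ⟨fun x hx => ?_, by simp, ?_⟩
      · simp only [mem_replicate] at hx; omega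
      · rw [water_zero_iff]
        have := shape_no212 n 0 0
        simpa using this
    · rw [mem_Hfin] at hab
      refine ⟨parts12_shape _ _ _, ?_, ?_⟩
      · rw [shapeF, sum_shape]; simp at hab ⊢; omega
      · rw [water_zero_iff]; exact shape_no212 _ _ _

lemma count2_shape (a b c : ℕ) :
    (replicate a 1 ++ replicate b 2 ++ replicate c 1).count 2 = b := by
  simp [List.count_append, List.count_replicate]

lemma indexOf2_shape (a b c : ℕ) (hb : 1 ≤ b) :
    (replicate a 1 ++ replicate b 2 ++ replicate c 1).idxOf 2 = a := by
  rw [List.append_assoc, List.idxOf_append_of_notMem (by simp [List.mem_replicate]),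
    List.length_replicate]
  obtain ⟨b', rfl⟩ : ∃ b', b = b' + 1 := ⟨b - 1, by omega⟩
  rw [List.replicate_succ, List.cons_append, List.idxOf_cons_self]
  omega

lemma shapeF_injOn (n : ℕ) : Set.InjOn (shapeF n) ↑(Hfin n) := by
  rintro ⟨a, b⟩ hab ⟨a', b'⟩ hab' h
  rw [Finset.mem_coe, mem_Hfin] at hab hab'
  rw [shapeF, shapeF] at h
  have hcount : b = b' := by
    have h2 : (replicate a 1 ++ replicate b 2 ++ replicate (n - (a + 2 * b)) 1).count 2 =
        (replicate a' 1 ++ replicate b' 2 ++ replicate (n - (a' + 2 * b')) 1).count 2 :=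
      congrArg (fun l : List ℕ => l.count 2) h
    rwa [count2_shape, count2_shape] at h2
  have hidx : a = a' := by
    have h2 : (replicate a 1 ++ replicate b 2 ++ replicate (n - (a + 2 * b)) 1).idxOf 2 =
        (replicate a' 1 ++ replicate b' 2 ++ replicate (n - (a' + 2 * b')) 1).idxOf 2 :=
      congrArg (fun l : List ℕ => l.idxOf 2) h
    rwa [indexOf2_shape _ _ _ hab.1, indexOf2_shape _ _ _ hab'.1] at h2
  cases hidx; cases hcount; rfl

lemma sum_row (t n : ℕ) (h : 2 * t ≤ n) :
    ∑ b ∈ Finset.Icc 1 t, (n + 1 - 2 * b) = t * (n - t) := by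
  induction t with
  | zero => simp
  | succ t ih =>
    rw [Finset.sum_Icc_succ_top (by omega), ih (by omega)]
    obtain ⟨m, rfl⟩ : ∃ m, n = 2 * t + 2 + m := ⟨n - (2 * t + 2), by omega⟩
    have h1 : 2 * t + 2 + m - t = t + 2 + m := by omega
    have h2 : 2 * t + 2 + m + 1 - 2 * (t + 1) = m + 1 := by omega
    have h3 : 2 * t + 2 + m - (t + 1) = t + 1 + m := by omega
    rw [h1, h2, h3]
    ring

lemma card_Hfin (n : ℕ) : (Hfin n).card = n / 2 * ((n + 1) / 2) := by
  have heq : Hfin n = (Finset.Icc 1 (n / 2)).biUnion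
      (fun b => (Finset.range (n + 1 - 2 * b)).image (fun a => (a, b))) := by
    ext ⟨a, b⟩
    simp only [mem_Hfin, Finset.mem_biUnion, Finset.mem_Icc, Finset.mem_image, Finset.mem_range]
    constructor
    · rintro ⟨h1, h2⟩
      exact ⟨b, ⟨h1, by omega⟩, a, by omega, rfl⟩
    · rintro ⟨b', ⟨h1, h2⟩, a', ha', heq⟩
      obtain ⟨rfl, rfl⟩ : a' = a ∧ b' = b := by
        constructor <;> [exact congrArg Prod.fst heq; exact congrArg Prod.snd heq]
      omega
  rw [heq, Finset.card_biUnion]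
  · rw [Finset.sum_congr rfl (fun b _ => Finset.card_image_of_injective _
      (fun x y hxy => congrArg Prod.fst hxy))]
    simp only [Finset.card_range]
    rw [sum_row _ _ (by omega)]
    congr 1
    omega
  · intro b hb b' hb' hbb
    rw [Function.onFun, Finset.disjoint_left]
    intro p hp hp'
    simp only [Finset.mem_image, Finset.mem_range] at hp hp'
    obtain ⟨a, -, rfl⟩ := hp
    obtain ⟨a', -, heq'⟩ := hp'
    exact hbb (congrArg Prod.snd heq').symm

lemma Zset_card (n : ℕ) : (Zset n).Finite ∧ (Zset n).ncard = 1 + n / 2 * ((n + 1) / 2) := by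
  have himg : (shapeF n '' ↑(Hfin n)).Finite := ((Hfin n).finite_toSet).image _
  have hnotmem : replicate n 1 ∉ shapeF n '' ↑(Hfin n) := by
    rintro ⟨⟨a, b⟩, hab, heq⟩
    rw [Finset.mem_coe, mem_Hfin] at hab
    have := congrArg (fun l : List ℕ => l.count 2) heq
    simp only [shapeF] at this
    rw [count2_shape] at this
    simp [List.count_replicate] at this
    omega
  rw [Zset_eq]
  refine ⟨himg.insert _, ?_⟩
  rw [Set.ncard_insert_of_notMem hnotmem himg,
    Set.ncard_image_of_injOn (shapeF_injOn n), Set.ncard_coe_finset, card_Hfin]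
  omega

noncomputable def acount (m : ℕ) : ℚ :=
  ({l : List ℕ | Parts12 l ∧ l.sum = m + 5 ∧ 1 ≤ waterCells l}.ncard : ℚ)

lemma Wset_eq (n : ℕ) :
    {l : List ℕ | Parts12 l ∧ l.sum = n ∧ 1 ≤ waterCells l} = Sset n \ Zset n := by
  ext l
  simp only [Set.mem_setOf_eq, Set.mem_diff, Sset, Zset, Set.mem_setOf_eq]
  constructor
  · rintro ⟨hp, hs, hw⟩
    exact ⟨⟨hp, hs⟩, fun h => by omega⟩
  · rintro ⟨⟨hp, hs⟩, h⟩
    refine ⟨hp, hs, ?_⟩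
    by_contra hw
    exact h ⟨hp, hs, by omega⟩

lemma acount_eq (m : ℕ) :
    acount m = (Nat.fib (m + 6) : ℚ) - 1 - (((m + 5) / 2 * ((m + 6) / 2) : ℕ) : ℚ) := by
  obtain ⟨hSf, hSc⟩ := Sset_finite_card (m + 5)
  obtain ⟨hZf, hZc⟩ := Zset_card (m + 5)
  have hsub : Zset (m + 5) ⊆ Sset (m + 5) := fun l hl => ⟨hl.1, hl.2.1⟩
  have hle : (Zset (m + 5)).ncard ≤ (Sset (m + 5)).ncard := Set.ncard_le_ncard hsub hSf
  rw [acount, Wset_eq, Set.ncard_diff hsub hZf, Nat.cast_sub (by omega), hSc, hZc]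
  have h1 : m + 5 + 1 = m + 6 := by omega
  rw [h1]
  push_cast
  ring

lemma coeff_term (f : ℕ → ℚ) (k n : ℕ) (h : k ≤ n) :
    PowerSeries.coeff n (PowerSeries.mk f * q ^ k) = f (n - k) := by
  rw [q, PowerSeries.coeff_mul_X_pow', if_pos h, PowerSeries.coeff_mk]

lemma coeff_term1 (f : ℕ → ℚ) (n : ℕ) (h : 1 ≤ n) :
    PowerSeries.coeff n (PowerSeries.mk f * q) = f (n - 1) := by
  rw [← pow_one q]
  exact coeff_term f 1 n h

lemma fibq (a b : ℕ) (h : b = a + 2) :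
    (Nat.fib b : ℚ) = Nat.fib a + Nat.fib (a + 1) := by
  rw [h, Nat.fib_add_two]
  push_cast
  ring

lemma key (m : ℕ) :
    acount (m + 6) - 3 * acount (m + 5) + acount (m + 4) + 4 * acount (m + 3)
      - 3 * acount (m + 2) - acount (m + 1) + acount m = 0 := by
  simp only [acount_eq]
  rcases Nat.even_or_odd m with ⟨s, rfl⟩ | ⟨s, rfl⟩
  · have hA : s + s = 2 * s := by omega
    rw [hA]
    rw [show 2 * s + 6 + 6 = 2 * s + 12 by omega, show 2 * s + 5 + 6 = 2 * s + 11 by omega,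
      show 2 * s + 4 + 6 = 2 * s + 10 by omega, show 2 * s + 3 + 6 = 2 * s + 9 by omega,
      show 2 * s + 2 + 6 = 2 * s + 8 by omega, show 2 * s + 1 + 6 = 2 * s + 7 by omega]
    rw [show (2 * s + 11) / 2 = s + 5 by omega, show (2 * s + 12) / 2 = s + 6 by omega,
      show (2 * s + 10) / 2 = s + 5 by omega, show (2 * s + 9) / 2 = s + 4 by omega,
      show (2 * s + 8) / 2 = s + 4 by omega, show (2 * s + 7) / 2 = s + 3 by omega,
      show (2 * s + 6) / 2 = s + 3 by omega, show (2 * s + 5) / 2 = s + 2 by omega]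
    rw [fibq (2 * s + 10) (2 * s + 12) (by omega), fibq (2 * s + 9) (2 * s + 11) (by omega),
      fibq (2 * s + 8) (2 * s + 10) (by omega), fibq (2 * s + 7) (2 * s + 9) (by omega),
      fibq (2 * s + 6) (2 * s + 8) (by omega)]
    rw [show 2 * s + 6 + 1 = 2 * s + 7 by omega]
    push_cast
    ring
  · rw [show 2 * s + 1 + 6 + 6 = 2 * s + 13 by omega, show 2 * s + 1 + 5 + 6 = 2 * s + 12 by omega,
      show 2 * s + 1 + 4 + 6 = 2 * s + 11 by omega, show 2 * s + 1 + 3 + 6 = 2 * s + 10 by omega,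
      show 2 * s + 1 + 2 + 6 = 2 * s + 9 by omega, show 2 * s + 1 + 1 + 6 = 2 * s + 8 by omega,
      show 2 * s + 1 + 6 = 2 * s + 7 by omega]
    rw [show (2 * s + 12) / 2 = s + 6 by omega, show (2 * s + 13) / 2 = s + 6 by omega,
      show (2 * s + 11) / 2 = s + 5 by omega, show (2 * s + 10) / 2 = s + 5 by omega,
      show (2 * s + 9) / 2 = s + 4 by omega, show (2 * s + 8) / 2 = s + 4 by omega,
      show (2 * s + 7) / 2 = s + 3 by omega, show (2 * s + 6) / 2 = s + 3 by omega]
    rw [fibq (2 * s + 11) (2 * s + 13) (by omega), fibq (2 * s + 10) (2 * s + 12) (by omega),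
      fibq (2 * s + 9) (2 * s + 11) (by omega), fibq (2 * s + 8) (2 * s + 10) (by omega),
      fibq (2 * s + 7) (2 * s + 9) (by omega)]
    rw [show 2 * s + 7 + 1 = 2 * s + 8 by omega]
    push_cast
    ring

lemma fib_vals : Nat.fib 6 = 8 ∧ Nat.fib 7 = 13 ∧ Nat.fib 8 = 21 ∧ Nat.fib 9 = 34 ∧
    Nat.fib 10 = 55 ∧ Nat.fib 11 = 89 := by
  repeat' constructor
  all_goals decide

theorem stmt19 :
    PowerSeries.mk
        (fun m => ({l : List ℕ | Parts12 l ∧ l.sum = m + 5 ∧ 1 ≤ waterCells l}.ncard : ℚ)) =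
      ((1 - q) ^ 2 * (1 - q ^ 2) * (1 - q - q ^ 2))⁻¹ := by
  have hc : PowerSeries.constantCoeff ((1 - q) ^ 2 * (1 - q ^ 2) * (1 - q - q ^ 2)) ≠ 0 := by
    simp [q]
  rw [PowerSeries.eq_inv_iff_mul_eq_one hc]
  have hmk : PowerSeries.mk
      (fun m => ({l : List ℕ | Parts12 l ∧ l.sum = m + 5 ∧ 1 ≤ waterCells l}.ncard : ℚ)) =
      PowerSeries.mk acount := rfl
  rw [hmk]
  have hexp : PowerSeries.mk acount * ((1 - q) ^ 2 * (1 - q ^ 2) * (1 - q - q ^ 2)) =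
      PowerSeries.mk acount - 3 * (PowerSeries.mk acount * q) + PowerSeries.mk acount * q ^ 2 +
        4 * (PowerSeries.mk acount * q ^ 3) - 3 * (PowerSeries.mk acount * q ^ 4) -
        PowerSeries.mk acount * q ^ 5 + PowerSeries.mk acount * q ^ 6 := by
    ring
  rw [hexp]
  ext n
  have h3 : (3 : PowerSeries ℚ) = PowerSeries.C (3 : ℚ) := (map_ofNat (PowerSeries.C (R := ℚ)) 3).symm
  have h4 : (4 : PowerSeries ℚ) = PowerSeries.C (4 : ℚ) := (map_ofNat (PowerSeries.C (R := ℚ)) 4).symm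
  rw [map_add, map_sub, map_sub, map_add, map_add, map_sub, h3, h4, PowerSeries.coeff_C_mul,
    PowerSeries.coeff_C_mul, PowerSeries.coeff_C_mul, PowerSeries.coeff_one, PowerSeries.coeff_mk]
  obtain ⟨f6, f7, f8, f9, f10, f11⟩ := fib_vals
  match n with
  | 0 | 1 | 2 | 3 | 4 | 5 =>
    simp only [q, PowerSeries.coeff_mul_X_pow', PowerSeries.coeff_mk]
    norm_num [acount_eq, f6, f7, f8, f9, f10, f11]
  | (n + 6) =>
    rw [coeff_term1 _ _ (by omega : 1 ≤ n + 6), coeff_term _ _ _ (by omega : 2 ≤ n + 6),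
      coeff_term _ _ _ (by omega : 3 ≤ n + 6), coeff_term _ _ _ (by omega : 4 ≤ n + 6),
      coeff_term _ _ _ (by omega : 5 ≤ n + 6), coeff_term _ _ _ (by omega : 6 ≤ n + 6)]
    rw [show n + 6 - 1 = n + 5 by omega, show n + 6 - 2 = n + 4 by omega,
      show n + 6 - 3 = n + 3 by omega, show n + 6 - 4 = n + 2 by omega,
      show n + 6 - 5 = n + 1 by omega, show n + 6 - 6 = n by omega, if_neg (by omega)]
    linarith [key n]
end
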